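/- arXiv:2512.12542 — 2 statements merged into one kernel-verified Lean document; each statement's English description precedes it below -/
import Mathlib

section
/- For all real x, y, λ and nonnegative integers j ≤ n, ∑_{k=j}^{n} C(n,k)(x)_{n-k,λ} C(k,j)(y)_{k-j,λ} = C(n,j)(x+y)_{n-j,λ}. -/
open Finset

/-- Generalized falling factorial `(x)_{n,lam} = x(x-lam)...(x-(n-1)lam)`. -/
noncomputable def dfall (lam x : ℝ) (n : ℕ) : ℝ := ∏ i ∈ Finset.range n, (x - i * lam)

/-- Generalized rising factorial `⟨x⟩_{n,lam} = x(x+lam)...(x+(n-1)lam)`. -/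
noncomputable def drise (lam x : ℝ) (n : ℕ) : ℝ := ∏ i ∈ Finset.range n, (x + i * lam)

lemma dfall_succ (lam z : ℝ) (m : ℕ) :
    dfall lam z (m + 1) = dfall lam z m * (z - m * lam) := by
  simp [dfall, Finset.prod_range_succ]

lemma dfall_vand (lam x y : ℝ) (m : ℕ) :
    dfall lam (x + y) m
      = ∑ i ∈ Finset.range (m + 1),
          (m.choose i : ℝ) * dfall lam x (m - i) * dfall lam y i := by
  induction m with
  | zero => simp [dfall]
  | succ m ih =>
    rw [dfall_succ, ih, Finset.sum_mul]
    have key : ∀ i ∈ Finset.range (m + 1),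
        (m.choose i : ℝ) * dfall lam x (m - i) * dfall lam y i * (x + y - m * lam)
          = (m.choose i : ℝ) * dfall lam x (m + 1 - i) * dfall lam y i
            + (m.choose i : ℝ) * dfall lam x (m - i) * dfall lam y (i + 1) := by
      intro i hi
      have him : i ≤ m := Nat.lt_succ_iff.mp (Finset.mem_range.mp hi)
      have h1 : dfall lam x (m + 1 - i) = dfall lam x (m - i) * (x - ((m - i : ℕ) : ℝ) * lam) := by
        rw [show m + 1 - i = (m - i) + 1 by omega, dfall_succ]
      have h2 : dfall lam y (i + 1) = dfall lam y i * (y - i * lam) := dfall_succ ..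
      have hc : ((m - i : ℕ) : ℝ) = (m : ℝ) - i := by
        rw [Nat.cast_sub him]
      rw [h1, h2, hc]; ring
    rw [Finset.sum_congr rfl key, Finset.sum_add_distrib]
    rw [Finset.sum_range_succ'
      (fun i => (((m + 1).choose i : ℕ) : ℝ) * dfall lam x (m + 1 - i) * dfall lam y i) (m + 1)]
    have hsplit : ∀ i ∈ Finset.range (m + 1),
        (((m + 1).choose (i + 1) : ℕ) : ℝ) * dfall lam x (m + 1 - (i + 1)) * dfall lam y (i + 1)
          = (m.choose (i + 1) : ℝ) * dfall lam x (m - i) * dfall lam y (i + 1)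
            + (m.choose i : ℝ) * dfall lam x (m - i) * dfall lam y (i + 1) := by
      intro i _
      rw [show m + 1 - (i + 1) = m - i by omega, Nat.choose_succ_succ]
      push_cast; ring
    rw [Finset.sum_congr rfl hsplit, Finset.sum_add_distrib]
    have h2 : ∑ i ∈ Finset.range (m + 1),
          (m.choose (i + 1) : ℝ) * dfall lam x (m - i) * dfall lam y (i + 1)
        = ∑ i ∈ Finset.range m,
          (m.choose (i + 1) : ℝ) * dfall lam x (m - i) * dfall lam y (i + 1) := by
      rw [Finset.sum_range_succ]; simp
    have hA : ∑ i ∈ Finset.range (m + 1),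
          (m.choose i : ℝ) * dfall lam x (m + 1 - i) * dfall lam y i
        = (∑ i ∈ Finset.range m,
            (m.choose (i + 1) : ℝ) * dfall lam x (m - i) * dfall lam y (i + 1))
          + (m.choose 0 : ℝ) * dfall lam x (m + 1) * dfall lam y 0 := by
      rw [Finset.sum_range_succ'
        (fun i => (m.choose i : ℝ) * dfall lam x (m + 1 - i) * dfall lam y i) m]
      congr 1
      exact Finset.sum_congr rfl fun i _ => by rw [show m + 1 - (i + 1) = m - i by omega]
    rw [h2, hA]
    simp only [Nat.choose_zero_right, Nat.cast_one, Nat.sub_zero]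
    ring

theorem stmt2 (x y lam : ℝ) (j n : ℕ) (hjn : j ≤ n) :
    ∑ k ∈ Finset.Icc j n,
        (n.choose k : ℝ) * dfall lam x (n - k) * (k.choose j : ℝ) * dfall lam y (k - j) =
      (n.choose j : ℝ) * dfall lam (x + y) (n - j) := by
  rw [dfall_vand, Finset.mul_sum, ← Finset.Ico_add_one_right_eq_Icc, Finset.sum_Ico_eq_sum_range,
    show n + 1 - j = n - j + 1 by omega]
  refine Finset.sum_congr rfl fun i hi => ?_
  have hi' : i ≤ n - j := Nat.lt_succ_iff.mp (Finset.mem_range.mp hi)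
  have h1 : j + i ≤ n := by omega
  have h2 : j ≤ j + i := Nat.le_add_right _ _
  have hc : n.choose (j + i) * (j + i).choose j = n.choose j * (n - j).choose ((j + i) - j) :=
    Nat.choose_mul h2
  have hc' : ((n.choose (j + i) : ℕ) : ℝ) * ((j + i).choose j : ℝ)
      = (n.choose j : ℝ) * ((n - j).choose i : ℝ) := by
    rw [show (j + i) - j = i by omega] at hc
    exact_mod_cast congrArg (Nat.cast (R := ℝ)) hc
  rw [show n - (j + i) = n - j - i by omega, show (j + i) - j = i by omega]
  calc (n.choose (j + i) : ℝ) * dfall lam x (n - j - i) * ((j + i).choose j : ℝ) * dfall lam y i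
      = ((n.choose (j + i) : ℝ) * ((j + i).choose j : ℝ)) * dfall lam x (n - j - i) * dfall lam y i := by ring
    _ = ((n.choose j : ℝ) * ((n - j).choose i : ℝ)) * dfall lam x (n - j - i) * dfall lam y i := by rw [hc']
    _ = (n.choose j : ℝ) * (((n - j).choose i : ℝ) * dfall lam x (n - j - i) * dfall lam y i) := by ring
end

section
/- Let λ be real and let the degenerate Euler–Seidel matrix be defined by a_{n,0}(λ) = a_n and a_{n,k}(λ) = (1-(k-n)λ) a_{n,k-1}(λ) + a_{n+1,k-1}(λ) for n ≥ 0, k ≥ 1. Then for all n ≥ 0, a_{n,0}(λ) = ∑_{k=0}^{n} C(n,k) (-1)^{n-k} ⟨1-λ⟩_{n-k,λ} a_{0,k}(λ). -/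
open Finset

noncomputable def cES (lam : ℝ) (n k j : ℕ) : ℝ :=
  (n.choose j : ℝ) * (-1 : ℝ) ^ (n - j) * drise lam (1 - (k + 1 : ℝ) * lam) (n - j)

lemma drise_succ (lam x : ℝ) (m : ℕ) :
    drise lam x (m + 1) = drise lam x m * (x + m * lam) := by
  simp [drise, Finset.prod_range_succ]

lemma drise_succ' (lam x : ℝ) (m : ℕ) :
    drise lam x (m + 1) = x * drise lam (x + lam) m := by
  rw [drise, Finset.prod_range_succ', drise]
  have h1 : ∀ i ∈ Finset.range m, (x + ((i : ℕ) + 1 : ℕ) * lam) = ((x + lam) + i * lam) := by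
    intro i _; push_cast; ring
  rw [Finset.prod_congr rfl h1]
  push_cast; ring

lemma cES_zero (lam : ℝ) (n k : ℕ) :
    cES lam (n + 1) k 0 = -(1 - ((k + 1 : ℝ) - (n : ℝ)) * lam) * cES lam n k 0 := by
  simp only [cES, Nat.choose_zero_right, Nat.cast_one, Nat.sub_zero, drise_succ]
  push_cast
  ring

lemma cES_top (lam : ℝ) (n k : ℕ) : cES lam n k (n + 1) = 0 := by
  simp [cES, Nat.choose_succ_self]

lemma cES_rec (lam : ℝ) (n k j : ℕ) (hj : j ≤ n) :
    cES lam (n + 1) k (j + 1) =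
      cES lam n (k + 1) j - (1 - ((k + 1 : ℝ) - (n : ℝ)) * lam) * cES lam n k (j + 1) := by
  rcases Nat.eq_or_lt_of_le hj with rfl | hlt
  · simp [cES, Nat.choose_self, Nat.sub_self, Nat.choose_succ_self, drise]
  · obtain ⟨m, rfl⟩ : ∃ m, n = j + 1 + m := ⟨n - (j + 1), by omega⟩
    simp only [cES,
      show j + 1 + m + 1 - (j + 1) = m + 1 from by omega,
      show j + 1 + m - j = m + 1 from by omega,
      show j + 1 + m - (j + 1) = m from by omega]
    push_cast
    have hP1 : (((j + 1 + m + 1).choose (j + 1) : ℝ)) =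
        ((j + 1 + m).choose j : ℝ) + ((j + 1 + m).choose (j + 1) : ℝ) := by
      have hn : (j + 1 + m + 1).choose (j + 1) =
          (j + 1 + m).choose j + (j + 1 + m).choose (j + 1) := by
        rw [show j + 1 + m + 1 = (j + m + 1) + 1 from by omega,
          show j + 1 + m = j + m + 1 from by omega]
        exact Nat.choose_succ_succ (j + m + 1) j
      exact_mod_cast hn
    have hP2n : ((j + 1 + m + 1).choose (j + 1)) * (m + 1) =
        (j + 1 + m + 1) * ((j + 1 + m).choose (j + 1)) := by
      have h1 := Nat.choose_succ_right_eq (j + 1 + m + 1) (j + 1)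
      rw [show j + 1 + m + 1 - (j + 1) = m + 1 from by omega] at h1
      have h2 := Nat.add_one_mul_choose_eq (j + 1 + m) (j + 1)
      rw [h2]
      exact h1.symm
    have hP2 : (((j + 1 + m + 1).choose (j + 1) : ℝ)) * ((m : ℝ) + 1) =
        ((j : ℝ) + 1 + (m : ℝ) + 1) * ((j + 1 + m).choose (j + 1) : ℝ) := by
      exact_mod_cast hP2n
    have hds : drise lam (1 - ((k : ℝ) + 1 + 1) * lam) (m + 1)
        = (1 - ((k : ℝ) + 2) * lam) * drise lam (1 - ((k : ℝ) + 1) * lam) m := by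
      rw [drise_succ',
        show (1 - ((k : ℝ) + 1 + 1) * lam) + lam = 1 - ((k : ℝ) + 1) * lam from by ring]
      ring
    rw [drise_succ lam _ m, hds, pow_succ]
    set D := drise lam (1 - ((k : ℝ) + 1) * lam) m with hD
    linear_combination ((-1 : ℝ) ^ m * D * (-(1 - ((k : ℝ) + 2) * lam))) * hP1 +
      ((-1 : ℝ) ^ m * D * (-lam)) * hP2

theorem stmt5 (lam : ℝ) (a : ℕ → ℝ) (A : ℕ → ℕ → ℝ)
    (hA0 : ∀ n : ℕ, A n 0 = a n)
    (hA : ∀ n k : ℕ, A n (k + 1) = (1 - ((k + 1 : ℝ) - (n : ℝ)) * lam) * A n k + A (n + 1) k)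
    (n : ℕ) :
    A n 0 = ∑ k ∈ Finset.range (n + 1),
      (n.choose k : ℝ) * (-1 : ℝ) ^ (n - k) * drise lam (1 - lam) (n - k) * A 0 k := by
  have key : ∀ n k : ℕ, A n k = ∑ j ∈ Finset.range (n + 1), cES lam n k j * A 0 (k + j) := by
    intro n
    induction n with
    | zero => intro k; simp [cES, drise]
    | succ n IH =>
      intro k
      have hstep : A (n + 1) k = A n (k + 1) - (1 - ((k + 1 : ℝ) - (n : ℝ)) * lam) * A n k := by
        linarith [hA n k]
      rw [hstep, IH (k + 1), IH k]
      set u : ℝ := 1 - ((k + 1 : ℝ) - (n : ℝ)) * lam with hu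
      have h2 : ∑ j ∈ Finset.range (n + 1), cES lam n k j * A 0 (k + j)
          = (∑ j ∈ Finset.range (n + 1), cES lam n k (j + 1) * A 0 (k + (j + 1)))
            + cES lam n k 0 * A 0 (k + 0) := by
        rw [Finset.sum_range_succ' (fun j => cES lam n k j * A 0 (k + j)) n,
          Finset.sum_range_succ (fun j => cES lam n k (j + 1) * A 0 (k + (j + 1))) n]
        simp [cES_top]
      rw [h2]
      rw [Finset.sum_range_succ' (fun j => cES lam (n + 1) k j * A 0 (k + j)) (n + 1)]
      have h3 : ∑ j ∈ Finset.range (n + 1), cES lam n (k + 1) j * A 0 (k + 1 + j)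
          = ∑ j ∈ Finset.range (n + 1), cES lam n (k + 1) j * A 0 (k + (j + 1)) := by
        apply Finset.sum_congr rfl
        intro j _
        congr 2
        omega
      rw [h3]
      have h4 : ∑ j ∈ Finset.range (n + 1), cES lam (n + 1) k (j + 1) * A 0 (k + (j + 1))
          = ∑ j ∈ Finset.range (n + 1),
            (cES lam n (k + 1) j * A 0 (k + (j + 1))
              - u * (cES lam n k (j + 1) * A 0 (k + (j + 1)))) := by
        apply Finset.sum_congr rfl
        intro j hjmem
        rw [cES_rec lam n k j (Nat.lt_succ_iff.mp (Finset.mem_range.mp hjmem))]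
        ring
      rw [h4, Finset.sum_sub_distrib, ← Finset.mul_sum, cES_zero]
      ring
  rw [key n 0]
  apply Finset.sum_congr rfl
  intro j _
  simp only [cES, zero_add]
  norm_num
end
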